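/- arXiv:2304.02529 — 6 statements merged into one kernel-verified Lean document; each statement's English description precedes it below -/
import Mathlib

section
/- Let $\gamma>1$, $L\geq 1$, $0<\iota<1$ and suppose $0<\gamma^{-(1-\iota)}L^{\iota}<e^{-2c}<1$ for some $c>0$. Let $(L_1,\dots,L_n)$ be a sequence with each $L_i\in\{L,\gamma^{-1}\}$ such that for every positive integer $j$ with $jm\leq n$, the number of indices $i\in(n-jm,n]$ with $L_i=L$ is at most $\iota jm$. Then for every $0\leq k<n$, the product $L_{k+1}L_{k+2}\cdots L_n \leq (Le^{2c})^m e^{-2c(n-k)}$. -/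
/-!
Write `n - k = j m + i` with `i < m` and split `(k, n]` at `k + i`. Every factor is at most `L`,
so the head `(k, k + i]` contributes at most `L ^ i`. On the window `(k + i, n]` of length
`N = j m`, if `r ≤ ι N` factors equal `L`, then since `L γ ≥ 1`,
`L ^ r γ⁻¹ ^ (N - r) = γ⁻¹ ^ N (L γ) ^ r ≤ (γ ^ (-(1 - ι)) L ^ ι) ^ N < e ^ (-2 c N)`.
Enlarging `L ^ i` to `(L e ^ (2 c)) ^ m` pays for the missing factor `e ^ (-2 c i)`.
-/

open Finset Real

theorem prod_eq_pow_mul_pow_of_forall_eq_or_eq {α M : Type*} [CommMonoid M] [DecidableEq M]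
    {s : Finset α} {f : α → M} {a b : M} (hf : ∀ x ∈ s, f x = a ∨ f x = b) :
    ∏ x ∈ s, f x = a ^ #(s.filter (f · = a)) * b ^ #(s.filter (f · ≠ a)) := by
  rw [← prod_filter_mul_prod_filter_not s (f · = a)]
  congr 1
  · exact prod_eq_pow_card fun x hx => (mem_filter.mp hx).2
  · refine prod_eq_pow_card fun x hx => ?_
    obtain ⟨hxs, hxa⟩ := mem_filter.mp hx
    exact (hf x hxs).resolve_left hxa

theorem pow_mul_inv_pow_le_rpow_pow {γ L ι : ℝ} (hγ : 0 < γ) (hL : 0 < L) (hLγ : 1 ≤ L * γ)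
    {r s : ℕ} (hr : (r : ℝ) ≤ ι * (r + s : ℕ)) :
    L ^ r * γ⁻¹ ^ s ≤ (γ ^ (-(1 - ι)) * L ^ ι) ^ (r + s) := by
  rw [← log_le_log_iff (by positivity) (by positivity), log_pow, log_mul (by positivity)
    (by positivity), log_pow, log_pow, log_inv, log_mul (by positivity) (by positivity),
    log_rpow hγ, log_rpow hL]
  have hlog : 0 ≤ log L + log γ := by
    rw [← log_mul hL.ne' hγ.ne']
    exact log_nonneg hLγ
  push_cast at hr ⊢
  nlinarith [mul_le_mul_of_nonneg_right hr hlog]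

theorem prod_le_rpow_pow_card {α : Type*} {γ L ι : ℝ} (hγ : 0 < γ) (hL : 0 < L)
    (hLγ : 1 ≤ L * γ) {s : Finset α} {f : α → ℝ} (hf : ∀ x ∈ s, f x = L ∨ f x = γ⁻¹)
    (hs : (#(s.filter (f · = L)) : ℝ) ≤ ι * #s) :
    ∏ x ∈ s, f x ≤ (γ ^ (-(1 - ι)) * L ^ ι) ^ #s := by
  classical
  have hcard : #(s.filter (f · = L)) + #(s.filter (f · ≠ L)) = #s :=
    card_filter_add_card_filter_not _
  rw [prod_eq_pow_mul_pow_of_forall_eq_or_eq hf, ← hcard]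
  exact pow_mul_inv_pow_le_rpow_pow hγ hL hLγ (by rwa [hcard])

theorem prod_le_pow_card_of_le {α : Type*} {s : Finset α} {f : α → ℝ} {L : ℝ}
    (h0 : ∀ x ∈ s, 0 ≤ f x) (hL : ∀ x ∈ s, f x ≤ L) : ∏ x ∈ s, f x ≤ L ^ #s :=
  (prod_le_prod h0 hL).trans_eq (prod_const L)

theorem pow_mul_pow_le_mul_exp {L ρ c : ℝ} (hL : 1 ≤ L) (hc : 0 ≤ c) (hρ0 : 0 ≤ ρ)
    (hρ : ρ ≤ exp (-(2 * c))) {i m : ℕ} (N : ℕ) (him : i ≤ m) :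
    L ^ i * ρ ^ N ≤ (L * exp (2 * c)) ^ m * exp (-(2 * c) * ((N + i : ℕ) : ℝ)) :=
  calc L ^ i * ρ ^ N ≤ L ^ i * exp (-(2 * c)) ^ N := by gcongr
    _ = (L * exp (2 * c)) ^ i * exp (-(2 * c) * ((N + i : ℕ) : ℝ)) := by
      rw [mul_pow, ← exp_nat_mul, ← exp_nat_mul, mul_assoc, ← exp_add]
      push_cast
      ring_nf
    _ ≤ (L * exp (2 * c)) ^ m * exp (-(2 * c) * ((N + i : ℕ) : ℝ)) := by
      gcongr
      exact one_le_mul_of_one_le_of_one_le hL (one_le_exp (by positivity))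

theorem good_branch_contraction_general
    (γ L c ι : ℝ) (m n : ℕ)
    (hγ : 1 < γ) (hL : 1 ≤ L) (hc : 0 < c)
    (hm : 0 < m)
    (havg' : γ ^ (-(1 - ι)) * L ^ ι < Real.exp (-(2 * c)))
    (Ls : ℕ → ℝ)
    (hvals : ∀ i, Ls i = L ∨ Ls i = γ⁻¹)
    (hgood : ∀ j : ℕ, 1 ≤ j → j * m ≤ n →
      (((Finset.Ioc (n - j * m) n).filter (fun i => Ls i = L)).card : ℝ) ≤ ι * (j * m)) :
    ∀ k, k < n →
      (∏ i ∈ Finset.Ioc k n, Ls i) ≤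
        (L * Real.exp (2 * c)) ^ m * Real.exp (-(2 * c) * ((n : ℝ) - k)) := by
  intro k hk
  have hγ0 : 0 < γ := one_pos.trans hγ
  have hL0 : 0 < L := one_pos.trans_le hL
  have hLs : ∀ x, 0 ≤ Ls x ∧ Ls x ≤ L := fun x => by
    rcases hvals x with h | h <;> rw [h]
    · exact ⟨hL0.le, le_rfl⟩
    · exact ⟨by positivity, (inv_le_one_of_one_le₀ hγ.le).trans hL⟩
  obtain ⟨j, i, him, hdecomp⟩ : ∃ j i, i < m ∧ j * m + i = n - k :=
    ⟨_, _, Nat.mod_lt _ hm, Nat.div_add_mod' _ _⟩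
  have hwindow : (#((Ioc (k + i) n).filter (Ls · = L)) : ℝ) ≤ ι * #(Ioc (k + i) n) := by
    rw [Nat.card_Ioc, show n - (k + i) = j * m by omega]
    rcases Nat.eq_zero_or_pos j with rfl | hj
    · simp [show k + i = n by omega]
    · simpa [show n - j * m = k + i by omega] using hgood j hj (by omega)
  rw [← prod_Ioc_consecutive Ls (Nat.le_add_right k i) (by omega : k + i ≤ n)]
  calc (∏ x ∈ Ioc k (k + i), Ls x) * ∏ x ∈ Ioc (k + i) n, Ls x
      ≤ L ^ i * (γ ^ (-(1 - ι)) * L ^ ι) ^ (j * m) := by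
        have hhead := prod_le_pow_card_of_le (s := Ioc k (k + i)) (fun x _ => (hLs x).1)
          fun x _ => (hLs x).2
        have htail := prod_le_rpow_pow_card hγ0 hL0
          (one_le_mul_of_one_le_of_one_le hL hγ.le) (fun x _ => hvals x) hwindow
        rw [Nat.card_Ioc, Nat.add_sub_cancel_left] at hhead
        rw [Nat.card_Ioc, show n - (k + i) = j * m by omega] at htail
        exact mul_le_mul hhead htail (prod_nonneg fun x _ => (hLs x).1) (by positivity)
    _ ≤ (L * exp (2 * c)) ^ m * exp (-(2 * c) * ((j * m + i : ℕ) : ℝ)) :=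
        pow_mul_pow_le_mul_exp hL hc.le (by positivity) havg'.le _ him.le
    _ = (L * exp (2 * c)) ^ m * exp (-(2 * c) * ((n : ℝ) - k)) := by
        rw [hdecomp, Nat.cast_sub hk.le]

/-- Contraction along good inverse branches: if a sequence of local Lipschitz
constants, each equal to `L` or `γ⁻¹`, takes the value `L` at most an `ι`-fraction
of the time in every final window `(n - j*m, n]`, then the tail products contract
exponentially. -/
theorem good_branch_contraction
    (γ L c ι : ℝ) (m n : ℕ)
    (hγ : 1 < γ) (hL : 1 ≤ L) (hι0 : 0 < ι) (hι1 : ι < 1) (hc : 0 < c)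
    (hm : 0 < m)
    (havg : 0 < γ ^ (-(1 - ι)) * L ^ ι)
    (havg' : γ ^ (-(1 - ι)) * L ^ ι < Real.exp (-(2 * c)))
    (hexp : Real.exp (-(2 * c)) < 1)
    (Ls : ℕ → ℝ)
    (hvals : ∀ i, Ls i = L ∨ Ls i = γ⁻¹)
    (hgood : ∀ j : ℕ, 1 ≤ j → j * m ≤ n →
      (((Finset.Ioc (n - j * m) n).filter (fun i => Ls i = L)).card : ℝ) ≤ ι * (j * m)) :
    ∀ k, k < n →
      (∏ i ∈ Finset.Ioc k n, Ls i) ≤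
        (L * Real.exp (2 * c)) ^ m * Real.exp (-(2 * c) * ((n : ℝ) - k)) :=
  good_branch_contraction_general γ L c ι m n hγ hL hc hm havg' Ls hvals hgood
end

section
/- Given $\varepsilon>0$ and integers $d>q\geq 1$, there exists $\iota_0\in(0,1)$ such that for all $\iota\in(\iota_0,1)$, the number $\#I(\iota,n)$ of words $w\in\{1,\dots,d\}^n$ having at least $\iota n$ letters in $\{1,\dots,q\}$ satisfies $\limsup_{n\to\infty}\frac{1}{n}\log \#I(\iota,n) < \log q + \varepsilon$; consequently there exists $C>0$ with $\#I(\iota,n)\leq C q^n e^{\varepsilon n}$ for all $n$. -/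
/-!
Exponential Markov (Chernoff) bound. Weight a word by `exp (s * m)`, where `m` is its number of
letters `< q`; the total weight of all words of length `n` is `(q * exp s + (d - q)) ^ n`, while
each word with at least `ι n` such letters weighs at least `exp (s * ι * n)`. Taking `s` large
makes `q * exp s + (d - q) ≤ q * exp s * exp (ε / 2)`, and then taking `ι` close to `1` makes
`exp (s * (1 - ι)) ≤ exp (ε / 2)`, so that there are at most `q ^ n * exp (ε * n)` such words.
-/

open Finset Filter Real

theorem Fintype.sum_pow_card_filter {α R : Type*} [Fintype α] [CommSemiring R]
    (p : α → Prop) [DecidablePred p] (x : R) (n : ℕ) :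
    ∑ w : Fin n → α, x ^ #{k | p (w k)} = (#{a | p a} * x + #{a | ¬ p a}) ^ n := by
  calc ∑ w : Fin n → α, x ^ #{k | p (w k)}
      = ∑ w : Fin n → α, ∏ k, if p (w k) then x else 1 := by
        simp only [prod_ite, prod_const, one_pow, mul_one]
    _ = (∑ a, if p a then x else 1) ^ n := (Fintype.sum_pow (fun a => if p a then x else 1) n).symm
    _ = _ := by simp only [sum_ite, sum_const, nsmul_eq_mul, mul_one]

section BadWords

variable {d q : ℕ}

def lowCount {n : ℕ} (q : ℕ) (w : Fin n → Fin d) : ℕ := #{k | (w k : ℕ) < q}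

noncomputable def badWords (d q n : ℕ) (ι : ℝ) : Finset (Fin n → Fin d) :=
  {w | ι * n ≤ lowCount q w}

theorem sum_exp_mul_lowCount (hqd : q ≤ d) (s : ℝ) (n : ℕ) :
    ∑ w : Fin n → Fin d, exp (s * lowCount q w) = (q * exp s + (d - q)) ^ n := by
  have hlow : #{a : Fin d | (a : ℕ) < q} = q := by simp [Fin.card_filter_val_lt, hqd]
  have hhigh : #{a : Fin d | ¬ (a : ℕ) < q} = d - q := by
    rw [filter_not, card_sdiff_of_subset (filter_subset _ _), hlow, card_univ, Fintype.card_fin]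
  simp only [lowCount, mul_comm s, exp_nat_mul]
  rw [Fintype.sum_pow_card_filter (fun a : Fin d => (a : ℕ) < q), hlow, hhigh, Nat.cast_sub hqd]

theorem card_badWords_mul_exp_le (hqd : q ≤ d) (ι : ℝ) {s : ℝ} (hs : 0 ≤ s) (n : ℕ) :
    #(badWords d q n ι) * exp (s * (ι * n)) ≤ (q * exp s + (d - q)) ^ n := by
  rw [← sum_exp_mul_lowCount hqd]
  calc (#(badWords d q n ι) : ℝ) * exp (s * (ι * n))
      = ∑ _w ∈ badWords d q n ι, exp (s * (ι * n)) := by rw [sum_const, nsmul_eq_mul]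
    _ ≤ ∑ w ∈ badWords d q n ι, exp (s * lowCount q w) :=
        sum_le_sum fun w hw => exp_le_exp.2 (mul_le_mul_of_nonneg_left (mem_filter.1 hw).2 hs)
    _ ≤ ∑ w, exp (s * lowCount q w) :=
        sum_le_sum_of_subset_of_nonneg (subset_univ _) fun _ _ _ => (exp_pos _).le

theorem exists_card_badWords_le (hq : 1 ≤ q) (hqd : q ≤ d) {ε : ℝ} (hε : 0 < ε) :
    ∃ ι₀ ∈ Set.Ioo (0 : ℝ) 1, ∀ ι ∈ Set.Ioo ι₀ 1, ∀ n : ℕ,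
      (#(badWords d q n ι) : ℝ) ≤ q ^ n * exp (ε * n) := by
  set δ := exp (ε / 2) - 1
  have hδ : 0 < δ := by simp only [δ, sub_pos, one_lt_exp_iff]; positivity
  have hq' : (1 : ℝ) ≤ q := by exact_mod_cast hq
  have hqd' : (q : ℝ) ≤ d := by exact_mod_cast hqd
  set s := (d - q) / δ
  have hs : 0 ≤ s := div_nonneg (by linarith) hδ.le
  have hbase : q * exp s + (d - q) ≤ q * exp s * exp (ε / 2) := by
    have : (d : ℝ) - q ≤ δ * exp s :=
      calc (d : ℝ) - q = δ * s := (mul_div_cancel₀ _ hδ.ne').symm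
        _ ≤ δ * exp s := by gcongr; linarith [add_one_le_exp s]
    nlinarith [exp_pos s]
  refine ⟨1 - ε / (2 * s + 2 + ε), ⟨?_, ?_⟩, fun ι hι n => ?_⟩
  · rw [sub_pos, div_lt_one (by positivity)]; linarith
  · have : 0 < ε / (2 * s + 2 + ε) := by positivity
    linarith
  have hslack : s * (1 - ι) ≤ ε / 2 := by
    have h1 : 1 - ι < ε / (2 * s + 2 + ε) := by linarith [hι.1]
    rw [lt_div_iff₀ (by positivity)] at h1
    nlinarith [hι.2]
  have hchernoff := card_badWords_mul_exp_le hqd ι hs n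
  rw [← le_div_iff₀ (exp_pos _)] at hchernoff
  calc (#(badWords d q n ι) : ℝ) ≤ (q * exp s + (d - q)) ^ n / exp (s * (ι * n)) := hchernoff
    _ ≤ (q * exp s * exp (ε / 2)) ^ n / exp (s * (ι * n)) := by gcongr
    _ = q ^ n * exp (s * (1 - ι) * n + ε / 2 * n) := by
        rw [mul_pow, mul_pow, ← exp_nat_mul, ← exp_nat_mul, mul_assoc, mul_div_assoc, ← exp_add,
          ← exp_sub]
        ring_nf
    _ ≤ q ^ n * exp (ε * n) := by
        gcongr
        nlinarith [(Nat.cast_nonneg n : (0 : ℝ) ≤ n)]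

theorem badWords_nonempty (hq : 1 ≤ q) (hqd : q ≤ d) {ι : ℝ} (hι : ι ≤ 1) (n : ℕ) :
    (badWords d q n ι).Nonempty := by
  refine ⟨fun _ => ⟨0, by omega⟩, mem_filter.2 ⟨mem_univ _, ?_⟩⟩
  have hall : lowCount q (fun _ : Fin n => (⟨0, by omega⟩ : Fin d)) = n := by
    simp [lowCount, (by omega : 0 < q)]
  rw [hall]
  nlinarith [(Nat.cast_nonneg n : (0 : ℝ) ≤ n)]

end BadWords

theorem limsup_inv_mul_log_le {a : ℕ → ℝ} {b c : ℝ} (hb : 0 < b) (ha : ∀ n, 1 ≤ a n)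
    (hab : ∀ n, a n ≤ b ^ n * exp (c * n)) :
    limsup (fun n : ℕ => 1 / (n : ℝ) * log (a n)) atTop ≤ log b + c := by
  have hnonneg (n : ℕ) : 0 ≤ 1 / (n : ℝ) * log (a n) :=
    mul_nonneg (by positivity) (log_nonneg (ha n))
  refine limsup_le_of_le (isBoundedUnder_of ⟨0, hnonneg⟩).isCoboundedUnder_le ?_
  filter_upwards [eventually_gt_atTop 0] with n hn
  have hlog : log (a n) ≤ n * (log b + c) :=
    calc log (a n) ≤ log (b ^ n * exp (c * n)) := log_le_log (by linarith [ha n]) (hab n)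
      _ = n * (log b + c) := by rw [log_mul (by positivity) (exp_ne_zero _), log_pow, log_exp]; ring
  rw [one_div, inv_mul_le_iff₀ (by exact_mod_cast hn)]
  exact hlog

/-- Counting lemma of Varandas–Viana: for `ι` close enough to 1, the number of
words of length `n` over an alphabet of size `d` having at least `ι n` letters
among the first `q` letters has exponential growth rate below `log q + ε`, and
consequently is bounded by `C q^n e^{ε n}`. -/
theorem count_bad_words (ε : ℝ) (hε : 0 < ε) (d q : ℕ) (hq : 1 ≤ q) (hqd : q < d) :
    ∃ ι₀ : ℝ, ι₀ ∈ Set.Ioo (0 : ℝ) 1 ∧ ∀ ι : ℝ, ι ∈ Set.Ioo ι₀ 1 →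
      (Filter.limsup (fun n : ℕ =>
          (1 / (n : ℝ)) * Real.log
            ((Finset.univ.filter (fun w : Fin n → Fin d =>
              ι * n ≤ ((Finset.univ.filter (fun k : Fin n => (w k : ℕ) < q)).card : ℝ))).card))
        atTop < Real.log q + ε) ∧
      ∃ C : ℝ, 0 < C ∧ ∀ n : ℕ,
        (((Finset.univ.filter (fun w : Fin n → Fin d =>
            ι * n ≤ ((Finset.univ.filter (fun k : Fin n => (w k : ℕ) < q)).card : ℝ))).card : ℝ))
          ≤ C * (q : ℝ) ^ n * Real.exp (ε * n) := by
  obtain ⟨ι₀, hι₀, hbound⟩ := exists_card_badWords_le hq hqd.le (half_pos hε)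
  refine ⟨ι₀, hι₀, fun ι hι => ⟨?_, 1, one_pos, fun n => ?_⟩⟩
  · have hone (n : ℕ) : (1 : ℝ) ≤ #(badWords d q n ι) :=
      Nat.one_le_cast.2 (badWords_nonempty hq hqd.le hι.2.le n).card_pos
    calc _ ≤ log q + ε / 2 := limsup_inv_mul_log_le (by exact_mod_cast hq) hone (hbound ι hι)
      _ < log q + ε := by linarith
  · calc (#(badWords d q n ι) : ℝ) ≤ q ^ n * exp (ε / 2 * n) := hbound ι hι n
      _ ≤ 1 * q ^ n * exp (ε * n) := by rw [one_mul]; gcongr; linarith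
end

section
/- Let $0<\zeta<1$, $K>0$, and $D>0$. Suppose $\phi,\psi$ are positive functions on a metric space of diameter $\leq D$ with Hölder seminorms $|\phi|_\alpha\leq \zeta K\inf\phi$ and $|\psi|_\alpha\leq \zeta K\inf\psi$. Then the Hilbert projective distance between $\phi$ and $\psi$ in the cone $\Lambda_K=\{\psi>0 : |\psi|_\alpha\leq K\inf\psi\}$ satisfies $\Theta(\phi,\psi)\leq 2\log\frac{1+\zeta}{1-\zeta}+2\log(1+\zeta K D^{\alpha})$. -/
noncomputable section

variable {X : Type*} [MetricSpace X]

/-- Membership in the cone `Λ_K` of positive `α`-Hölder functions whose Hölder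
seminorm is at most `K` times their infimum. -/
def memConeK (K α : ℝ) (χ : X → ℝ) : Prop :=
  (∀ x, 0 < χ x) ∧
    ∀ x y : X, |χ x - χ y| ≤ K * sInf (Set.range χ) * dist x y ^ α

/-- `A(φ,ψ) = sup{t > 0 : ψ - tφ ∈ Λ_K ∪ {0}}`. -/
def coneA (K α : ℝ) (φ ψ : X → ℝ) : ℝ :=
  sSup {t : ℝ | 0 < t ∧ (memConeK K α (ψ - t • φ) ∨ ψ - t • φ = 0)}

/-- `B(φ,ψ) = inf{t > 0 : tφ - ψ ∈ Λ_K ∪ {0}}`. -/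
def coneB (K α : ℝ) (φ ψ : X → ℝ) : ℝ :=
  sInf {t : ℝ | 0 < t ∧ (memConeK K α (t • φ - ψ) ∨ t • φ - ψ = 0)}

/-- The Hilbert projective metric `Θ(φ,ψ) = log(B/A)` on the cone `Λ_K`. -/
def hilbertTheta (K α : ℝ) (φ ψ : X → ℝ) : ℝ :=
  Real.log (coneB K α φ ψ / coneA K α φ ψ)

/-- Helper: membership in the cone follows from a uniform positive lower bound
`c` together with a Hölder estimate with constant `K * c`. -/
private lemma memConeK_of_lower_bound [Nonempty X] {K α : ℝ} (hK : 0 < K)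
    {χ : X → ℝ} {c : ℝ} (hc : 0 < c) (hlow : ∀ x, c ≤ χ x)
    (hhold : ∀ x y : X, |χ x - χ y| ≤ K * c * dist x y ^ α) :
    memConeK K α χ := by
  have hinf : c ≤ sInf (Set.range χ) := by
    apply le_csInf (Set.range_nonempty χ)
    rintro b ⟨x, rfl⟩
    exact hlow x
  refine ⟨fun x => lt_of_lt_of_le hc (hlow x), fun x y => ?_⟩
  refine (hhold x y).trans ?_
  have hd : (0:ℝ) ≤ dist x y ^ α := Real.rpow_nonneg dist_nonneg α
  exact mul_le_mul_of_nonneg_right (mul_le_mul_of_nonneg_left hinf hK.le) hd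

/-- Helper: basic bounds on the range of a positive Hölder function. -/
private lemma range_bounds [Nonempty X]
    {K ζ D α : ℝ} (hK : 0 < K) (hζ0 : 0 < ζ) (hD : 0 < D) (hα : 0 < α)
    (hdiam : ∀ x y : X, dist x y ≤ D)
    (φ : X → ℝ) (hφpos : ∀ x, 0 < φ x)
    (hφ : ∀ x y : X, |φ x - φ y| ≤ ζ * K * sInf (Set.range φ) * dist x y ^ α) :
    0 < sInf (Set.range φ) ∧ BddAbove (Set.range φ) ∧
      sSup (Set.range φ) ≤ sInf (Set.range φ) * (1 + ζ * K * D ^ α) := by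
  obtain ⟨x₀⟩ := ‹Nonempty X›
  set m := sInf (Set.range φ) with hm
  have hbb : BddBelow (Set.range φ) := by
    refine ⟨0, ?_⟩; rintro b ⟨x, rfl⟩; exact (hφpos x).le
  have hm0 : 0 ≤ m := by
    apply le_csInf (Set.range_nonempty φ)
    rintro b ⟨x, rfl⟩; exact (hφpos x).le
  have hDα : 0 < D ^ α := Real.rpow_pos_of_pos hD α
  have hdα : ∀ x y : X, dist x y ^ α ≤ D ^ α := fun x y =>
    Real.rpow_le_rpow dist_nonneg (hdiam x y) hα.le
  have key : ∀ x y : X, φ x ≤ φ y + ζ * K * m * D ^ α := by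
    intro x y
    have h1 := hφ x y
    have h2 : φ x - φ y ≤ |φ x - φ y| := le_abs_self _
    have h3 : ζ * K * m * dist x y ^ α ≤ ζ * K * m * D ^ α :=
      mul_le_mul_of_nonneg_left (hdα x y)
        (by positivity)
    linarith
  have hba : BddAbove (Set.range φ) := by
    refine ⟨φ x₀ + ζ * K * m * D ^ α, ?_⟩
    rintro b ⟨x, rfl⟩; exact key x x₀
  have hS : sSup (Set.range φ) ≤ m * (1 + ζ * K * D ^ α) := by
    apply csSup_le (Set.range_nonempty φ)
    rintro b ⟨x, rfl⟩
    have : φ x - ζ * K * m * D ^ α ≤ m := by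
      apply le_csInf (Set.range_nonempty φ)
      rintro b ⟨y, rfl⟩
      have := key x y
      linarith
    nlinarith
  have hφS : φ x₀ ≤ sSup (Set.range φ) := le_csSup hba ⟨x₀, rfl⟩
  have hEpos : 0 < ζ * K * D ^ α := by positivity
  have hmpos : 0 < m := by nlinarith [hφpos x₀]
  exact ⟨hmpos, hba, hS⟩

set_option maxHeartbeats 1600000 in
/-- Diameter bound: positive functions with Hölder seminorm at most `ζK` times
their infimum lie within Hilbert distance
`2 log((1+ζ)/(1-ζ)) + 2 log(1+ζKD^α)` of each other inside `Λ_K`. -/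
theorem hilbert_diameter_bound
    (K ζ D α : ℝ) (hK : 0 < K) (hζ0 : 0 < ζ) (hζ1 : ζ < 1) (hD : 0 < D)
    (hα : 0 < α) (hdiam : ∀ x y : X, dist x y ≤ D)
    (φ ψ : X → ℝ)
    (hφpos : ∀ x, 0 < φ x) (hψpos : ∀ x, 0 < ψ x)
    (hφ : ∀ x y : X, |φ x - φ y| ≤ ζ * K * sInf (Set.range φ) * dist x y ^ α)
    (hψ : ∀ x y : X, |ψ x - ψ y| ≤ ζ * K * sInf (Set.range ψ) * dist x y ^ α) :
    hilbertTheta K α φ ψ ≤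
      2 * Real.log ((1 + ζ) / (1 - ζ)) + 2 * Real.log (1 + ζ * K * D ^ α) := by
  have hDα : 0 < D ^ α := Real.rpow_pos_of_pos hD α
  have hE0 : 0 < ζ * K * D ^ α := by positivity
  have hRHS : 0 ≤ 2 * Real.log ((1 + ζ) / (1 - ζ)) + 2 * Real.log (1 + ζ * K * D ^ α) := by
    have h1 : (1:ℝ) ≤ (1 + ζ) / (1 - ζ) := by
      rw [le_div_iff₀ (by linarith)]; linarith
    have h2 : (1:ℝ) ≤ 1 + ζ * K * D ^ α := by linarith
    have := Real.log_nonneg h1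
    have := Real.log_nonneg h2
    linarith
  cases isEmpty_or_nonempty X with
  | inl h =>
    -- Empty space: `coneA = sSup (0,∞) = 0` by convention, so `Θ = log 0 = 0`.
    have hA : coneA K α φ ψ = 0 := by
      have hset : {t : ℝ | 0 < t ∧ (memConeK K α (ψ - t • φ) ∨ ψ - t • φ = 0)}
          = {t : ℝ | 0 < t} := by
        ext t
        simp only [Set.mem_setOf_eq, and_iff_left_iff_imp]
        intro _
        exact Or.inl ⟨fun x => isEmptyElim x, fun x y => isEmptyElim x⟩
      rw [coneA, hset]
      have : ¬ BddAbove {t : ℝ | 0 < t} := by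
        rintro ⟨b, hb⟩
        have h1 : max b 0 + 1 ∈ {t : ℝ | 0 < t} := by
          simp only [Set.mem_setOf_eq]
          have := le_max_right b (0:ℝ); linarith
        have := hb h1
        have := le_max_left b (0:ℝ)
        linarith
      rw [csSup_of_not_bddAbove this, Real.sSup_empty]
    rw [hilbertTheta, hA, div_zero, Real.log_zero]
    exact hRHS
  | inr h =>
    haveI : Nonempty X := h
    obtain ⟨x₀⟩ := h
    -- Range bounds for φ and ψ
    obtain ⟨hmφpos, hφba, hSφle⟩ :=
      range_bounds hK hζ0 hD hα hdiam φ hφpos hφ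
    obtain ⟨hmψpos, hψba, hSψle⟩ :=
      range_bounds hK hζ0 hD hα hdiam ψ hψpos hψ
    set mφ := sInf (Set.range φ) with hmφdef
    set Sφ := sSup (Set.range φ) with hSφdef
    set mψ := sInf (Set.range ψ) with hmψdef
    set Sψ := sSup (Set.range ψ) with hSψdef
    have hφbb : BddBelow (Set.range φ) := by
      refine ⟨0, ?_⟩; rintro b ⟨x, rfl⟩; exact (hφpos x).le
    have hψbb : BddBelow (Set.range ψ) := by
      refine ⟨0, ?_⟩; rintro b ⟨x, rfl⟩; exact (hψpos x).le
    have hmφ_le : ∀ x, mφ ≤ φ x := fun x => csInf_le hφbb ⟨x, rfl⟩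
    have hφ_le_S : ∀ x, φ x ≤ Sφ := fun x => le_csSup hφba ⟨x, rfl⟩
    have hmψ_le : ∀ x, mψ ≤ ψ x := fun x => csInf_le hψbb ⟨x, rfl⟩
    have hψ_le_S : ∀ x, ψ x ≤ Sψ := fun x => le_csSup hψba ⟨x, rfl⟩
    have hSφpos : 0 < Sφ := lt_of_lt_of_le hmφpos ((hmφ_le x₀).trans (hφ_le_S x₀))
    have hSψpos : 0 < Sψ := lt_of_lt_of_le hmψpos ((hmψ_le x₀).trans (hψ_le_S x₀))
    have hmφSφ : mφ ≤ Sφ := (hmφ_le x₀).trans (hφ_le_S x₀)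
    have hmψSψ : mψ ≤ Sψ := (hmψ_le x₀).trans (hψ_le_S x₀)
    set tA := (1 - ζ) * mψ / ((1 + ζ) * Sφ) with htAdef
    set tB := (1 + ζ) * Sψ / ((1 - ζ) * mφ) with htBdef
    have htApos : 0 < tA :=
      div_pos (mul_pos (by linarith) hmψpos) (mul_pos (by linarith) hSφpos)
    have htBpos : 0 < tB :=
      div_pos (mul_pos (by linarith) hSψpos) (mul_pos (by linarith) hmφpos)
    have htAeq : tA * ((1 + ζ) * Sφ) = (1 - ζ) * mψ := by
      rw [htAdef]; exact div_mul_cancel₀ _ (mul_pos (by linarith : (0:ℝ) < 1 + ζ) hSφpos).ne'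
    have htBeq : tB * ((1 - ζ) * mφ) = (1 + ζ) * Sψ := by
      rw [htBdef]; exact div_mul_cancel₀ _ (mul_pos (by linarith : (0:ℝ) < 1 - ζ) hmφpos).ne'
    -- ψ - tA • φ ∈ Λ_K
    have hmemA : memConeK K α (ψ - tA • φ) := by
      have hlow : ∀ x, mψ - tA * Sφ ≤ (ψ - tA • φ) x := by
        intro x
        simp only [Pi.sub_apply, Pi.smul_apply, smul_eq_mul]
        have h1 := hmψ_le x
        have h2 : tA * φ x ≤ tA * Sφ :=
          mul_le_mul_of_nonneg_left (hφ_le_S x) htApos.le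
        linarith
      have hcpos : 0 < mψ - tA * Sφ := by
        linarith [htAeq, mul_pos hζ0 hmψpos, mul_pos hζ0 (mul_pos htApos hSφpos)]
      refine memConeK_of_lower_bound hK hcpos hlow ?_
      intro x y
      simp only [Pi.sub_apply, Pi.smul_apply, smul_eq_mul]
      have hd : (0:ℝ) ≤ dist x y ^ α := Real.rpow_nonneg dist_nonneg α
      have h1 := hψ x y
      have h2 := hφ x y
      have habs : |ψ x - tA * φ x - (ψ y - tA * φ y)|
          ≤ |ψ x - ψ y| + tA * |φ x - φ y| := by
        have e : ψ x - tA * φ x - (ψ y - tA * φ y)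
            = (ψ x - ψ y) + (-(tA * (φ x - φ y))) := by ring
        rw [e]
        refine (abs_add_le _ _).trans ?_
        rw [abs_neg, abs_mul, abs_of_nonneg htApos.le]
      refine habs.trans ?_
      have h3 : tA * |φ x - φ y| ≤ tA * (ζ * K * mφ * dist x y ^ α) :=
        mul_le_mul_of_nonneg_left h2 htApos.le
      have key : ζ * mψ + tA * (ζ * mφ) ≤ mψ - tA * Sφ := by
        linarith [mul_nonneg (mul_nonneg htApos.le hζ0.le) (sub_nonneg.2 hmφSφ), htAeq]
      have h5 := mul_le_mul_of_nonneg_right key (mul_nonneg hK.le hd)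
      have h4 : ζ * K * mψ * dist x y ^ α + tA * (ζ * K * mφ * dist x y ^ α)
          ≤ K * (mψ - tA * Sφ) * dist x y ^ α := by linear_combination h5
      linarith
    -- tB • φ - ψ ∈ Λ_K
    have hmemB : memConeK K α (tB • φ - ψ) := by
      have hlow : ∀ x, tB * mφ - Sψ ≤ (tB • φ - ψ) x := by
        intro x
        simp only [Pi.sub_apply, Pi.smul_apply, smul_eq_mul]
        have h1 := hψ_le_S x
        have h2 : tB * mφ ≤ tB * φ x :=
          mul_le_mul_of_nonneg_left (hmφ_le x) htBpos.le
        linarith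
      have hcpos : 0 < tB * mφ - Sψ := by
        linarith [htBeq, mul_pos hζ0 hSψpos, mul_pos hζ0 (mul_pos htBpos hmφpos)]
      refine memConeK_of_lower_bound hK hcpos hlow ?_
      intro x y
      simp only [Pi.sub_apply, Pi.smul_apply, smul_eq_mul]
      have hd : (0:ℝ) ≤ dist x y ^ α := Real.rpow_nonneg dist_nonneg α
      have h1 := hψ x y
      have h2 := hφ x y
      have habs : |tB * φ x - ψ x - (tB * φ y - ψ y)|
          ≤ tB * |φ x - φ y| + |ψ x - ψ y| := by
        have e : tB * φ x - ψ x - (tB * φ y - ψ y)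
            = (tB * (φ x - φ y)) + (-(ψ x - ψ y)) := by ring
        rw [e]
        refine (abs_add_le _ _).trans ?_
        rw [abs_neg, abs_mul, abs_of_nonneg htBpos.le]
      refine habs.trans ?_
      have h3 : tB * |φ x - φ y| ≤ tB * (ζ * K * mφ * dist x y ^ α) :=
        mul_le_mul_of_nonneg_left h2 htBpos.le
      have key : tB * (ζ * mφ) + ζ * mψ ≤ tB * mφ - Sψ := by
        linarith [mul_nonneg hζ0.le (sub_nonneg.2 hmψSψ), htBeq]
      have h5 := mul_le_mul_of_nonneg_right key (mul_nonneg hK.le hd)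
      have h4 : tB * (ζ * K * mφ * dist x y ^ α) + ζ * K * mψ * dist x y ^ α
          ≤ K * (tB * mφ - Sψ) * dist x y ^ α := by linear_combination h5
      linarith
    -- Bounds on coneA and coneB
    have hAset : BddAbove {t : ℝ | 0 < t ∧ (memConeK K α (ψ - t • φ) ∨ ψ - t • φ = 0)} := by
      refine ⟨ψ x₀ / φ x₀, ?_⟩
      rintro t ⟨ht, hmem | heq⟩
      · have := hmem.1 x₀
        simp only [Pi.sub_apply, Pi.smul_apply, smul_eq_mul] at this
        rw [le_div_iff₀ (hφpos x₀)]; linarith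
      · have := congrFun heq x₀
        simp only [Pi.sub_apply, Pi.smul_apply, smul_eq_mul, Pi.zero_apply] at this
        rw [le_div_iff₀ (hφpos x₀)]; linarith
    have hAge : tA ≤ coneA K α φ ψ := le_csSup hAset ⟨htApos, Or.inl hmemA⟩
    have hApos : 0 < coneA K α φ ψ := lt_of_lt_of_le htApos hAge
    have hBbdd : BddBelow {t : ℝ | 0 < t ∧ (memConeK K α (t • φ - ψ) ∨ t • φ - ψ = 0)} :=
      ⟨0, fun t ht => ht.1.le⟩
    have hBle : coneB K α φ ψ ≤ tB := csInf_le hBbdd ⟨htBpos, Or.inl hmemB⟩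
    have hB0 : 0 ≤ coneB K α φ ψ :=
      le_csInf ⟨tB, ⟨htBpos, Or.inl hmemB⟩⟩ fun t ht => ht.1.le
    -- ratio bound
    have hratio : coneB K α φ ψ / coneA K α φ ψ ≤ tB / tA :=
      div_le_div₀ htBpos.le hBle htApos hAge
    set Q := ((1 + ζ) / (1 - ζ)) ^ 2 * (1 + ζ * K * D ^ α) ^ 2 with hQdef
    have hQpos : 0 < Q :=
      mul_pos (pow_pos (div_pos (by linarith) (by linarith)) 2) (pow_pos (by linarith) 2)
    have hSS : Sψ * Sφ ≤ (1 + ζ * K * D ^ α) ^ 2 * (mψ * mφ) := by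
      nlinarith [mul_le_mul hSψle hSφle hSφpos.le
        (by positivity : (0:ℝ) ≤ mψ * (1 + ζ * K * D ^ α))]
    have hQbound : tB / tA ≤ Q := by
      have hr : tB / tA = ((1 + ζ) ^ 2 * (Sψ * Sφ)) / ((1 - ζ) ^ 2 * (mψ * mφ)) := by
        rw [htBdef, htAdef]
        field_simp
      have hQr : Q = ((1 + ζ) ^ 2 * ((1 + ζ * K * D ^ α) ^ 2 * (mψ * mφ)))
          / ((1 - ζ) ^ 2 * (mψ * mφ)) := by
        rw [hQdef]
        have h1 : (1 - ζ) ≠ 0 := by linarith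
        have h2 : mψ * mφ ≠ 0 := (mul_pos hmψpos hmφpos).ne'
        field_simp
      rw [hr, hQr]
      have hden : 0 < (1 - ζ) ^ 2 * (mψ * mφ) :=
        mul_pos (pow_pos (by linarith) 2) (mul_pos hmψpos hmφpos)
      exact (div_le_div_iff_of_pos_right hden).mpr
        (mul_le_mul_of_nonneg_left hSS (by positivity))
    have hlogQ : Real.log Q = 2 * Real.log ((1 + ζ) / (1 - ζ))
        + 2 * Real.log (1 + ζ * K * D ^ α) := by
      rw [hQdef, Real.log_mul (pow_ne_zero 2 (div_pos (by linarith : (0:ℝ) < 1 + ζ)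
          (by linarith : (0:ℝ) < 1 - ζ)).ne') (pow_ne_zero 2
          (by linarith : (0:ℝ) < 1 + ζ * K * D ^ α).ne'),
        Real.log_pow, Real.log_pow]
      push_cast
      ring
    rw [hilbertTheta]
    rcases eq_or_lt_of_le hB0 with hBz | hBpos
    · rw [← hBz, zero_div, Real.log_zero]
      exact hRHS
    · have hdivpos : 0 < coneB K α φ ψ / coneA K α φ ψ := div_pos hBpos hApos
      calc Real.log (coneB K α φ ψ / coneA K α φ ψ)
          ≤ Real.log (tB / tA) := Real.log_le_log hdivpos hratio
        _ ≤ Real.log Q := Real.log_le_log (div_pos htBpos htApos) hQbound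
        _ = _ := hlogQ

end
end

section
/- Let $(\Phi_n)$ be functions on a metric space $X$ and $\Phi$ a function such that: (i) $|\Phi_n(x)-\Phi(x)|\leq C\tau^n$ for all $x$ and $n$, with $\tau\in(0,1)$; (ii) $|\Phi_n(x)-\Phi_n(x')|\leq C\,\Gamma^{\alpha\beta n} d(x,x')^{\alpha\beta}$ for all $x,x',n$, with $\Gamma>1$, $\alpha,\beta>0$. Then $\Phi$ is Hölder continuous: with $\rho=\tau/\Gamma^{\alpha\beta}$ (assumed $<1$) and $\eta=\log\tau/\log\rho$, $|\Phi(x)-\Phi(x')|\leq 3C\rho^{-\eta} d(x,x')^{\alpha\beta\eta}$ for all $x,x'$ with $d(x,x')\leq 1$. -/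
/-- Interpolation argument: if `Φₙ → Φ` uniformly at geometric rate `τⁿ` and each
`Φₙ` is Hölder with constant growing like `Γ^(αβn)`, then `Φ` is Hölder with
exponent `αβη` where `ρ = τ/Γ^(αβ)` and `η = log τ / log ρ`. -/
theorem holder_limit_interpolation
    {X : Type*} [MetricSpace X]
    (Φn : ℕ → X → ℝ) (Φ : X → ℝ)
    (C τ Γ α β : ℝ)
    (hC : 0 < C) (hτ0 : 0 < τ) (hτ1 : τ < 1) (hΓ : 1 < Γ) (hα : 0 < α) (hβ : 0 < β)
    (happrox : ∀ x n, |Φn n x - Φ x| ≤ C * τ ^ n)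
    (hholder : ∀ x x' n, |Φn n x - Φn n x'| ≤
      C * (Γ ^ (α * β * n)) * dist x x' ^ (α * β))
    (hρ : τ / Γ ^ (α * β) < 1) :
    ∀ x x', dist x x' ≤ 1 →
      |Φ x - Φ x'| ≤
        3 * C * (τ / Γ ^ (α * β)) ^ (-(Real.log τ / Real.log (τ / Γ ^ (α * β)))) *
          dist x x' ^ (α * β * (Real.log τ / Real.log (τ / Γ ^ (α * β)))) := by
  intro x x' hd
  have hΓ0 : (0:ℝ) < Γ := lt_trans one_pos hΓ
  have hG0 : (0:ℝ) < Γ ^ (α * β) := Real.rpow_pos_of_pos hΓ0 _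
  set ρ : ℝ := τ / Γ ^ (α * β) with hρdef
  have hρ0 : 0 < ρ := div_pos hτ0 hG0
  have hlogρ : Real.log ρ < 0 := Real.log_neg hρ0 hρ
  have hlogτ : Real.log τ < 0 := Real.log_neg hτ0 hτ1
  set η : ℝ := Real.log τ / Real.log ρ with hηdef
  have hη0 : 0 < η := div_pos_of_neg_of_neg hlogτ hlogρ
  have hρη : ρ ^ η = τ := by
    rw [Real.rpow_def_of_pos hρ0, hηdef, mul_comm,
      div_mul_cancel₀ _ (ne_of_lt hlogρ), Real.exp_log hτ0]
  rcases eq_or_lt_of_le (dist_nonneg (x := x) (y := x')) with h0 | hdpos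
  · have hx : x = x' := dist_eq_zero.mp h0.symm
    subst hx
    simp only [dist_self, sub_self, abs_zero]
    rw [Real.zero_rpow (by positivity), mul_zero]
  · have ht0 : 0 < dist x x' ^ (α * β) := Real.rpow_pos_of_pos hdpos _
    have ht1 : dist x x' ^ (α * β) ≤ 1 :=
      Real.rpow_le_one (le_of_lt hdpos) hd (by positivity)
    set t : ℝ := dist x x' ^ (α * β) with htdef
    set s : ℝ := Real.log t / Real.log ρ with hsdef
    have hs0 : 0 ≤ s := by
      rw [hsdef, div_nonneg_iff]
      exact Or.inr ⟨Real.log_nonpos ht0.le ht1, hlogρ.le⟩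
    have hts : ρ ^ s = t := by
      rw [Real.rpow_def_of_pos hρ0, hsdef, mul_comm,
        div_mul_cancel₀ _ (ne_of_lt hlogρ), Real.exp_log ht0]
    set k : ℕ := ⌊s⌋₊ with hkdef
    have hk1 : (k:ℝ) ≤ s := Nat.floor_le hs0
    have hk2 : s ≤ (k:ℝ) + 1 := (Nat.lt_floor_add_one s).le
    have htub : t ≤ ρ ^ (k:ℝ) :=
      hts ▸ Real.rpow_le_rpow_of_exponent_ge hρ0 hρ.le hk1
    have htlb : ρ ^ ((k:ℝ) + 1) ≤ t :=
      hts ▸ Real.rpow_le_rpow_of_exponent_ge hρ0 hρ.le hk2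
    have hGρ : Γ ^ (α * β) = τ / ρ := by
      rw [hρdef]; field_simp
    have hGk : Γ ^ (α * β * (k:ℝ)) * t ≤ τ ^ k := by
      have h1 : Γ ^ (α * β * (k:ℝ)) = (τ / ρ) ^ (k:ℝ) := by
        rw [Real.rpow_mul hΓ0.le, hGρ]
      have h2 : (τ / ρ) ^ (k:ℝ) = τ ^ (k:ℝ) / ρ ^ (k:ℝ) := by
        rw [Real.div_rpow hτ0.le hρ0.le]
      have h3 : τ ^ (k:ℝ) / ρ ^ (k:ℝ) * t ≤ τ ^ (k:ℝ) / ρ ^ (k:ℝ) * ρ ^ (k:ℝ) := by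
        apply mul_le_mul_of_nonneg_left htub
        positivity
      have h4 : τ ^ (k:ℝ) / ρ ^ (k:ℝ) * ρ ^ (k:ℝ) = τ ^ (k:ℝ) :=
        div_mul_cancel₀ _ (by positivity)
      rw [h1, h2]
      calc τ ^ (k:ℝ) / ρ ^ (k:ℝ) * t ≤ τ ^ (k:ℝ) := h3.trans_eq h4
        _ = τ ^ k := Real.rpow_natCast τ k
    have key : |Φ x - Φ x'| ≤ 3 * C * τ ^ k := by
      have h1 := happrox x k
      have h2 := happrox x' k
      have h3 := hholder x x' k
      have h5 : C * (Γ ^ (α * β * (k:ℝ)) * t) ≤ C * τ ^ k :=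
        mul_le_mul_of_nonneg_left hGk hC.le
      have h6 : |Φ x - Φ x'| ≤ |Φn k x - Φ x| + |Φn k x - Φn k x'| + |Φn k x' - Φ x'| := by
        have := abs_sub_le (Φ x) (Φn k x) (Φ x')
        have := abs_sub_le (Φn k x) (Φn k x') (Φ x')
        rw [abs_sub_comm (Φ x) (Φn k x)] at *
        linarith [abs_sub_le (Φ x) (Φn k x) (Φ x'), abs_sub_le (Φn k x) (Φn k x') (Φ x'),
          abs_sub_comm (Φ x) (Φn k x)]
      nlinarith [h6, h1, h2, h3, h5]
    have hτk : τ ^ k ≤ ρ ^ (-η) * t ^ η := by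
      have hρk : ρ ^ (k:ℝ) ≤ t / ρ := by
        rw [le_div_iff₀ hρ0]
        calc ρ ^ (k:ℝ) * ρ = ρ ^ ((k:ℝ) + 1) := by
              rw [Real.rpow_add hρ0, Real.rpow_one]
          _ ≤ t := htlb
      have h1 : (ρ ^ (k:ℝ)) ^ η ≤ (t / ρ) ^ η :=
        Real.rpow_le_rpow (Real.rpow_nonneg hρ0.le _) hρk hη0.le
      have h2 : (τ:ℝ) ^ k = (ρ ^ (k:ℝ)) ^ η := by
        rw [← Real.rpow_natCast τ k, ← hρη, ← Real.rpow_mul hρ0.le,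
          mul_comm, Real.rpow_mul hρ0.le]
      have h3 : (t / ρ) ^ η = ρ ^ (-η) * t ^ η := by
        rw [Real.div_rpow ht0.le hρ0.le, Real.rpow_neg hρ0.le]
        ring
      rw [h2, ← h3]
      exact h1
    have htη : t ^ η = dist x x' ^ (α * β * η) := by
      rw [htdef, ← Real.rpow_mul dist_nonneg]
    calc |Φ x - Φ x'| ≤ 3 * C * τ ^ k := key
      _ ≤ 3 * C * (ρ ^ (-η) * t ^ η) := by
          apply mul_le_mul_of_nonneg_left hτk (by positivity)
      _ = 3 * C * ρ ^ (-η) * dist x x' ^ (α * β * η) := by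
          rw [htη]; ring
end

section
/- Let $\mathcal{L}_x$ be fiberwise transfer operators with potential $\varphi$ satisfying $\sup\varphi-\inf\varphi<\varepsilon_\varphi$ and $|e^{\varphi}|_\alpha<\varepsilon_\varphi e^{\inf\varphi}$, over a preimage structure in which $d$ preimages pair off with $q$ of them $L$-Lipschitz and $d-q$ of them $\gamma^{-1}$-Lipschitz. Set $s=e^{\varepsilon_\varphi}\cdot\frac{(d-q)\gamma^{-\alpha}+qL^{\alpha}}{d}$ and $\zeta=s+2s\varepsilon_\varphi\,\mathrm{diam}(Y)^{\alpha}$, and assume $\zeta<1$. Then for all sufficiently large $K$, $\mathcal{L}_x$ maps the cone $\Lambda_K=\{\psi>0:|\psi|_\alpha\leq K\inf\psi\}$ into $\Lambda_{\zeta K}$; i.e., $|\mathcal{L}_x\psi|_\alpha\leq \zeta K\inf\mathcal{L}_x\psi$ for all $\psi\in\Lambda_K$. -/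
noncomputable section

/-- Cone invariance `𝓛_x(Λ_K) ⊆ Λ_{ζK}`: for a fiberwise transfer operator
with almost-constant Hölder potential over a preimage structure in which `q` of
the `d` preimage branches are `L`-Lipschitz and the remaining `d - q` are
`γ⁻¹`-Lipschitz, setting `s = e^{ε_φ}((d-q)γ^{-α} + qL^α)/d` and
`ζ = s + 2sε_φ diam(Y)^α < 1`, the operator maps the cone
`Λ_K = {ψ > 0 : |ψ|_α ≤ K inf ψ}` into `Λ_{ζK}` for all large `K`. -/
theorem cone_invariance
    {Y : Type*} [MetricSpace Y] [CompactSpace Y] [Nonempty Y]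
    (d q : ℕ) (hq1 : 1 ≤ q) (hqd : q < d)
    (γ L α εφ : ℝ) (hγ : 1 < γ) (hL : 1 ≤ L) (hα : 0 < α) (hεφ : 0 < εφ)
    (p : Fin d → Y → Y)
    (hpair : ∀ (k : Fin d) (y y' : Y),
      ((k : ℕ) < q → dist (p k y) (p k y') ≤ L * dist y y') ∧
      (q ≤ (k : ℕ) → dist (p k y) (p k y') ≤ γ⁻¹ * dist y y'))
    (φ : Y → ℝ)
    (hosc : ∀ y y' : Y, φ y - φ y' < εφ)
    (heφ : ∀ y y' : Y, |Real.exp (φ y) - Real.exp (φ y')| ≤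
      εφ * Real.exp (sInf (Set.range φ)) * dist y y' ^ α)
    (hζ : Real.exp εφ * (((d : ℝ) - q) * γ ^ (-α) + q * L ^ α) / d *
        (1 + 2 * εφ * Metric.diam (Set.univ : Set Y) ^ α) < 1) :
    ∃ K₀ : ℝ, 0 < K₀ ∧ ∀ K : ℝ, K₀ ≤ K →
      ∀ ψ : Y → ℝ,
        (∀ y, 0 < ψ y) →
        (∀ y y' : Y, |ψ y - ψ y'| ≤ K * sInf (Set.range ψ) * dist y y' ^ α) →
        (∀ y, 0 < ∑ k : Fin d, Real.exp (φ (p k y)) * ψ (p k y)) ∧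
        ∀ y y' : Y,
          |(∑ k : Fin d, Real.exp (φ (p k y)) * ψ (p k y)) -
              ∑ k : Fin d, Real.exp (φ (p k y')) * ψ (p k y')| ≤
            (Real.exp εφ * (((d : ℝ) - q) * γ ^ (-α) + q * L ^ α) / d *
                (1 + 2 * εφ * Metric.diam (Set.univ : Set Y) ^ α)) * K *
              sInf (Set.range fun y'' => ∑ k : Fin d,
                Real.exp (φ (p k y'')) * ψ (p k y'')) *
              dist y y' ^ α := by
  classical
  obtain ⟨y₀⟩ := ‹Nonempty Y›
  set D := Metric.diam (Set.univ : Set Y) with hDdef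
  set M := (((d : ℝ) - q) * γ ^ (-α) + q * L ^ α) with hMdef
  have hd0 : 0 < d := lt_of_le_of_lt (Nat.zero_le q) hqd
  have hdR : (0:ℝ) < d := by exact_mod_cast hd0
  have hγ0 : (0:ℝ) < γ := lt_trans one_pos hγ
  have hγα : (0:ℝ) < γ ^ (-α) := Real.rpow_pos_of_pos hγ0 _
  have hL0 : (0:ℝ) < L := lt_of_lt_of_le one_pos hL
  have hLα : (0:ℝ) < L ^ α := Real.rpow_pos_of_pos hL0 _
  have hdq : (q:ℝ) < (d:ℝ) := by exact_mod_cast hqd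
  have hq0 : (0:ℝ) < q := by exact_mod_cast hq1
  have hM0 : 0 < M := by
    have h1 : 0 < ((d:ℝ) - q) * γ ^ (-α) := mul_pos (by linarith) hγα
    have h2 : 0 < (q:ℝ) * L ^ α := mul_pos hq0 hLα
    rw [hMdef]; linarith
  have hD0 : 0 ≤ D := Metric.diam_nonneg
  have hDα : (0:ℝ) ≤ D ^ α := Real.rpow_nonneg hD0 _
  have hζ0 : 0 < Real.exp εφ * M / d * (1 + 2 * εφ * D ^ α) := by
    have : (0:ℝ) < 1 + 2 * εφ * D ^ α := by nlinarith
    positivity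
  -- bounds on φ
  have hφbdd : BddBelow (Set.range φ) := by
    refine ⟨φ y₀ - εφ, ?_⟩
    rintro _ ⟨y, rfl⟩
    have := hosc y₀ y; linarith
  set iφ := sInf (Set.range φ) with hiφdef
  have hφlb : ∀ y, iφ ≤ φ y := fun y => csInf_le hφbdd ⟨y, rfl⟩
  have hφub : ∀ y, φ y ≤ iφ + εφ := by
    intro y
    have h1 : φ y - εφ ≤ iφ := by
      refine le_csInf ⟨φ y₀, y₀, rfl⟩ ?_
      rintro _ ⟨y', rfl⟩
      have := hosc y y'; linarith
    linarith
  have hdistD : ∀ y y' : Y, dist y y' ≤ D :=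
    fun y y' => Metric.dist_le_diam_of_mem isCompact_univ.isBounded trivial trivial
  -- the sum of branch contraction factors
  have hsumc : (∑ k : Fin d, (if (k:ℕ) < q then L ^ α else γ ^ (-α))) = M := by
    rw [Fin.sum_univ_eq_sum_range (fun j => if j < q then L ^ α else γ ^ (-α)) d]
    rw [Finset.range_eq_Ico, ← Finset.sum_Ico_consecutive _ (Nat.zero_le q) (le_of_lt hqd)]
    have h1 : ∑ j ∈ Finset.Ico 0 q, (if j < q then L ^ α else γ ^ (-α)) = (q:ℝ) * L ^ α := by
      have hc : ∀ j ∈ Finset.Ico 0 q, (if j < q then L ^ α else γ ^ (-α)) = L ^ α :=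
        fun j hj => if_pos (Finset.mem_Ico.mp hj).2
      rw [Finset.sum_congr rfl hc, Finset.sum_const, Nat.card_Ico, Nat.sub_zero, nsmul_eq_mul]
    have h2 : ∑ j ∈ Finset.Ico q d, (if j < q then L ^ α else γ ^ (-α))
        = ((d:ℝ) - q) * γ ^ (-α) := by
      have hc : ∀ j ∈ Finset.Ico q d, (if j < q then L ^ α else γ ^ (-α)) = γ ^ (-α) :=
        fun j hj => if_neg (not_lt.mpr (Finset.mem_Ico.mp hj).1)
      rw [Finset.sum_congr rfl hc, Finset.sum_const, Nat.card_Ico, nsmul_eq_mul,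
        Nat.cast_sub (le_of_lt hqd)]
    rw [h1, h2, hMdef]; ring
  refine ⟨max 1 (D ^ α)⁻¹, lt_of_lt_of_le one_pos (le_max_left _ _), ?_⟩
  intro K hK ψ hψpos hψhold
  have hK1 : (1:ℝ) ≤ K := le_trans (le_max_left _ _) hK
  have hK0 : (0:ℝ) < K := lt_of_lt_of_le one_pos hK1
  -- bounds on ψ
  have hψbdd : BddBelow (Set.range ψ) := ⟨0, by rintro _ ⟨y, rfl⟩; exact (hψpos y).le⟩
  set iψ := sInf (Set.range ψ) with hiψdef
  have hiψ0 : 0 ≤ iψ := le_csInf ⟨ψ y₀, ⟨y₀, rfl⟩⟩ (by rintro _ ⟨y, rfl⟩; exact (hψpos y).le)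
  have hψlb : ∀ y, iψ ≤ ψ y := fun y => csInf_le hψbdd ⟨y, rfl⟩
  have hψub : ∀ y, ψ y ≤ iψ * (1 + K * D ^ α) := by
    intro y
    have h1 : ψ y - K * iψ * D ^ α ≤ iψ := by
      refine le_csInf ⟨ψ y₀, y₀, rfl⟩ ?_
      rintro _ ⟨y', rfl⟩
      have h2 := abs_le.mp (hψhold y y')
      have h3 : dist y y' ^ α ≤ D ^ α := Real.rpow_le_rpow dist_nonneg (hdistD y y') hα.le
      have h4 : K * iψ * dist y y' ^ α ≤ K * iψ * D ^ α :=
        mul_le_mul_of_nonneg_left h3 (by positivity)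
      linarith [h2.2]
    nlinarith
  have hiψpos : 0 < iψ := by
    by_contra h
    push_neg at h
    have h1 := hψub y₀
    have h2 := hψpos y₀
    have h3 : 0 ≤ K * D ^ α := by positivity
    nlinarith
  -- the transfer operator
  set Lf := fun y'' => ∑ k : Fin d, Real.exp (φ (p k y'')) * ψ (p k y'') with hLfdef
  have hLpos : ∀ y, 0 < Lf y := by
    intro y
    have : Nonempty (Fin d) := Fin.pos_iff_nonempty.mp hd0
    exact Finset.sum_pos (fun k _ => mul_pos (Real.exp_pos _) (hψpos _)) Finset.univ_nonempty
  have hLlb : ∀ y, (d:ℝ) * Real.exp iφ * iψ ≤ Lf y := by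
    intro y
    have : (d:ℝ) * Real.exp iφ * iψ = ∑ _k : Fin d, Real.exp iφ * iψ := by
      rw [Finset.sum_const, Finset.card_univ, Fintype.card_fin, nsmul_eq_mul]; ring
    rw [this]
    exact Finset.sum_le_sum fun k _ =>
      mul_le_mul (Real.exp_le_exp.mpr (hφlb _)) (hψlb _) hiψ0 (Real.exp_pos _).le
  set iL := sInf (Set.range Lf) with hiLdef
  have hiLlb : (d:ℝ) * Real.exp iφ * iψ ≤ iL :=
    le_csInf ⟨Lf y₀, ⟨y₀, rfl⟩⟩ (by rintro _ ⟨y, rfl⟩; exact hLlb y)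
  refine ⟨hLpos, ?_⟩
  intro y y'
  by_cases hyy : dist y y' = 0
  · have hy : y = y' := eq_of_dist_eq_zero hyy
    subst hy
    simp [hyy, Real.zero_rpow (ne_of_gt hα)]
  -- now dist y y' > 0, so D ^ α > 0 and K * D ^ α ≥ 1
  have hdd : 0 < dist y y' := lt_of_le_of_ne dist_nonneg (Ne.symm hyy)
  have hDpos : 0 < D := lt_of_lt_of_le hdd (hdistD y y')
  have hDαpos : 0 < D ^ α := Real.rpow_pos_of_pos hDpos _
  have hKD : 1 ≤ K * D ^ α := by
    have h1 : (D ^ α)⁻¹ ≤ K := le_trans (le_max_right _ _) hK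
    calc (1:ℝ) = (D ^ α)⁻¹ * D ^ α := by field_simp
    _ ≤ K * D ^ α := mul_le_mul_of_nonneg_right h1 hDα
  set t := dist y y' ^ α with htdef
  have ht0 : 0 ≤ t := Real.rpow_nonneg dist_nonneg _
  set A := Real.exp (iφ + εφ) * (K * iψ) with hAdef
  set B := εφ * Real.exp iφ * (iψ * (1 + K * D ^ α)) with hBdef
  have hA0 : 0 ≤ A := by positivity
  have hB0 : 0 ≤ B := by positivity
  -- per-branch estimate
  have key : ∀ k : Fin d,
      |Real.exp (φ (p k y)) * ψ (p k y) - Real.exp (φ (p k y')) * ψ (p k y')| ≤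
        (A + B) * ((if (k:ℕ) < q then L ^ α else γ ^ (-α)) * t) := by
    intro k
    set c := (if (k:ℕ) < q then L ^ α else γ ^ (-α)) with hcdef
    have hc0 : 0 < c := by rw [hcdef]; split <;> [exact hLα; exact hγα]
    have hck : dist (p k y) (p k y') ^ α ≤ c * t := by
      rw [hcdef]
      by_cases hkq : (k:ℕ) < q
      · rw [if_pos hkq]
        calc dist (p k y) (p k y') ^ α ≤ (L * dist y y') ^ α :=
              Real.rpow_le_rpow dist_nonneg ((hpair k y y').1 hkq) hα.le
        _ = L ^ α * t := Real.mul_rpow hL0.le dist_nonneg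
      · rw [if_neg hkq]
        calc dist (p k y) (p k y') ^ α ≤ (γ⁻¹ * dist y y') ^ α :=
              Real.rpow_le_rpow dist_nonneg ((hpair k y y').2 (not_lt.mp hkq)) hα.le
        _ = γ⁻¹ ^ α * t := Real.mul_rpow (by positivity) dist_nonneg
        _ = γ ^ (-α) * t := by
              rw [Real.inv_rpow hγ0.le, ← Real.rpow_neg hγ0.le]
    have h1 : Real.exp (φ (p k y)) ≤ Real.exp (iφ + εφ) :=
      Real.exp_le_exp.mpr (hφub _)
    have h2 : |ψ (p k y) - ψ (p k y')| ≤ K * iψ * (c * t) :=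
      le_trans (hψhold _ _) (mul_le_mul_of_nonneg_left hck (by positivity))
    have h3 : |Real.exp (φ (p k y)) - Real.exp (φ (p k y'))| ≤ εφ * Real.exp iφ * (c * t) :=
      le_trans (heφ _ _) (mul_le_mul_of_nonneg_left hck (by positivity))
    have h4 : ψ (p k y') ≤ iψ * (1 + K * D ^ α) := hψub _
    have heq : Real.exp (φ (p k y)) * ψ (p k y) - Real.exp (φ (p k y')) * ψ (p k y')
        = Real.exp (φ (p k y)) * (ψ (p k y) - ψ (p k y'))
          + (Real.exp (φ (p k y)) - Real.exp (φ (p k y'))) * ψ (p k y') := by ring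
    calc |Real.exp (φ (p k y)) * ψ (p k y) - Real.exp (φ (p k y')) * ψ (p k y')|
        ≤ |Real.exp (φ (p k y)) * (ψ (p k y) - ψ (p k y'))|
          + |(Real.exp (φ (p k y)) - Real.exp (φ (p k y'))) * ψ (p k y')| := by
            rw [heq]; exact abs_add_le _ _
      _ = Real.exp (φ (p k y)) * |ψ (p k y) - ψ (p k y')|
          + |Real.exp (φ (p k y)) - Real.exp (φ (p k y'))| * ψ (p k y') := by
            rw [abs_mul, abs_mul, abs_of_pos (Real.exp_pos _), abs_of_pos (hψpos _)]
      _ ≤ Real.exp (iφ + εφ) * (K * iψ * (c * t))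
          + εφ * Real.exp iφ * (c * t) * (iψ * (1 + K * D ^ α)) :=
            add_le_add (mul_le_mul h1 h2 (abs_nonneg _) (Real.exp_pos _).le)
              (mul_le_mul h3 h4 (hψpos _).le (by positivity))
      _ = (A + B) * (c * t) := by rw [hAdef, hBdef]; ring
  -- sum the per-branch estimates
  have hsum : |Lf y - Lf y'| ≤ (A + B) * (M * t) := by
    rw [hLfdef]
    simp only [← Finset.sum_sub_distrib]
    calc |∑ k : Fin d, (Real.exp (φ (p k y)) * ψ (p k y) - Real.exp (φ (p k y')) * ψ (p k y'))|
        ≤ ∑ k : Fin d, |Real.exp (φ (p k y)) * ψ (p k y) - Real.exp (φ (p k y')) * ψ (p k y')| :=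
          Finset.abs_sum_le_sum_abs _ _
      _ ≤ ∑ k : Fin d, (A + B) * ((if (k:ℕ) < q then L ^ α else γ ^ (-α)) * t) :=
          Finset.sum_le_sum fun k _ => key k
      _ = (A + B) * ((∑ k : Fin d, (if (k:ℕ) < q then L ^ α else γ ^ (-α))) * t) := by
          rw [← Finset.mul_sum, Finset.sum_mul]
      _ = (A + B) * (M * t) := by rw [hsumc]
  -- conclude
  have hstep : (A + B) * M ≤ (Real.exp εφ * M / d * (1 + 2 * εφ * D ^ α)) * K * iL := by
    have hexp1 : (1:ℝ) ≤ Real.exp εφ := Real.one_le_exp hεφ.le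
    have hB' : B ≤ εφ * Real.exp iφ * (iψ * (2 * (K * D ^ α))) := by
      rw [hBdef]
      have : (1:ℝ) + K * D ^ α ≤ 2 * (K * D ^ α) := by linarith
      have h := mul_le_mul_of_nonneg_left this hiψ0
      exact mul_le_mul_of_nonneg_left h (by positivity)
    have hAB : A + B ≤ Real.exp εφ * (1 + 2 * εφ * D ^ α) * K * (Real.exp iφ * iψ) := by
      have hA' : A = Real.exp εφ * Real.exp iφ * (K * iψ) := by
        rw [hAdef, add_comm, Real.exp_add]
      have hB'' : εφ * Real.exp iφ * (iψ * (2 * (K * D ^ α)))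
          ≤ Real.exp εφ * (2 * εφ * D ^ α) * K * (Real.exp iφ * iψ) := by
        have h1 : εφ * Real.exp iφ * (iψ * (2 * (K * D ^ α)))
            = 1 * (2 * εφ * D ^ α) * K * (Real.exp iφ * iψ) := by ring
        rw [h1]
        gcongr
      calc A + B ≤ Real.exp εφ * Real.exp iφ * (K * iψ)
            + Real.exp εφ * (2 * εφ * D ^ α) * K * (Real.exp iφ * iψ) := by
              rw [← hA']; exact add_le_add (le_refl _) (le_trans hB' hB'')
        _ = Real.exp εφ * (1 + 2 * εφ * D ^ α) * K * (Real.exp iφ * iψ) := by ring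
    calc (A + B) * M
        ≤ (Real.exp εφ * (1 + 2 * εφ * D ^ α) * K * (Real.exp iφ * iψ)) * M := by
          exact mul_le_mul_of_nonneg_right hAB hM0.le
      _ = (Real.exp εφ * M / d * (1 + 2 * εφ * D ^ α)) * K * ((d:ℝ) * Real.exp iφ * iψ) := by
          field_simp
      _ ≤ (Real.exp εφ * M / d * (1 + 2 * εφ * D ^ α)) * K * iL := by
          exact mul_le_mul_of_nonneg_left hiLlb (by positivity)
  calc |Lf y - Lf y'| ≤ (A + B) * (M * t) := hsum
    _ = (A + B) * M * t := by ring
    _ ≤ (Real.exp εφ * M / d * (1 + 2 * εφ * D ^ α)) * K * iL * t :=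
        mul_le_mul_of_nonneg_right hstep ht0
end
end

section
/- Define $I:C(X\times Y)\to C(X)$ by $(I\psi)(x)=\int_{Y}\psi(x,y)\,d\nu_x(y)$, where $\{\nu_x\}$ satisfies $\mathcal{L}_x^*\nu_{fx}=e^{\Phi(x)}\nu_x$ and $x\mapsto\nu_x$ is weak*-continuous. Let $\mathcal{L}_\varphi$ be the full Ruelle operator of the skew product and $\mathcal{L}_\Phi\xi(x)=\sum_{\bar x\in f^{-1}x}e^{\Phi(\bar x)}\xi(\bar x)$. Then $I\circ\mathcal{L}_\varphi=\mathcal{L}_\Phi\circ I$, and dually $I^*\circ\mathcal{L}_\Phi^*=\mathcal{L}_\varphi^*\circ I^*$ where $I^*\eta=\int_X\nu_x\,d\eta(x)$. -/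
open MeasureTheory

noncomputable section

/-- Intertwining of the full Ruelle operator of a skew product with the induced
base transfer operator through the fiber-integration operator
`(Iψ)(x) = ∫_Y ψ(x,y) dν_x(y)`: one has `I ∘ 𝓛_φ = 𝓛_Φ ∘ I` and the dual
identity `I^* ∘ 𝓛_Φ^* = 𝓛_φ^* ∘ I^*`. -/
theorem intertwining
    {X Y : Type*} [MetricSpace X] [CompactSpace X] [MeasurableSpace X] [BorelSpace X]
    [MetricSpace Y] [CompactSpace Y] [MeasurableSpace Y] [BorelSpace Y]
    (f : X → X) (dX : ℕ) (fpre : Fin dX → X → X)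
    (hfpre : ∀ x : X, f ⁻¹' {x} = Set.range fun k => fpre k x)
    (hfpre_inj : ∀ x : X, Function.Injective fun k : Fin dX => fpre k x)
    (Lfib : X → C(Y, ℝ) →ₗ[ℝ] C(Y, ℝ))
    (Φ : X → ℝ)
    (ν : X → Measure Y) (hν : ∀ x, IsProbabilityMeasure (ν x))
    (hweak : ∀ ψ : C(X × Y, ℝ), Continuous fun x => ∫ y, ψ.curry x y ∂(ν x))
    (heig : ∀ (x : X) (ψ : C(Y, ℝ)),
      ∫ y, (Lfib x ψ) y ∂(ν (f x)) = Real.exp (Φ x) * ∫ y, ψ y ∂(ν x)) :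
    (∀ (ψ : C(X × Y, ℝ)) (x : X),
      ∫ y, (∑ k : Fin dX, (Lfib (fpre k x) (ψ.curry (fpre k x))) y) ∂(ν x) =
        ∑ k : Fin dX, Real.exp (Φ (fpre k x)) *
          ∫ y, ψ.curry (fpre k x) y ∂(ν (fpre k x))) ∧
    ∀ (ψ : C(X × Y, ℝ)) (η : Measure X), IsFiniteMeasure η →
      ∫ x, (∑ k : Fin dX, Real.exp (Φ (fpre k x)) *
          ∫ y, ψ.curry (fpre k x) y ∂(ν (fpre k x))) ∂η =
        ∫ x, (∫ y, (∑ k : Fin dX, (Lfib (fpre k x) (ψ.curry (fpre k x))) y) ∂(ν x)) ∂η := by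
  have hfx : ∀ (x : X) (k : Fin dX), f (fpre k x) = x := by
    intro x k
    have : fpre k x ∈ f ⁻¹' {x} := by
      rw [hfpre x]; exact ⟨k, rfl⟩
    simpa using this
  have h1 : ∀ (ψ : C(X × Y, ℝ)) (x : X),
      ∫ y, (∑ k : Fin dX, (Lfib (fpre k x) (ψ.curry (fpre k x))) y) ∂(ν x) =
        ∑ k : Fin dX, Real.exp (Φ (fpre k x)) *
          ∫ y, ψ.curry (fpre k x) y ∂(ν (fpre k x)) := by
    intro ψ x
    have := hν x
    refine (integral_finset_sum _ fun k _ =>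
      (BoundedContinuousFunction.mkOfCompact
        (Lfib (fpre k x) (ψ.curry (fpre k x)))).integrable (ν x)).trans ?_
    refine Finset.sum_congr rfl fun k _ => ?_
    have := heig (fpre k x) (ψ.curry (fpre k x))
    rwa [hfx x k] at this
  refine ⟨h1, fun ψ η _ => ?_⟩
  exact integral_congr_ae (Filter.Eventually.of_forall fun x => (h1 ψ x).symm)

end
end
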